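/- arXiv:2005.09058 — 2 statements merged into one kernel-verified Lean document; each statement's English description precedes it below -/
import Mathlib

section
/- For every nonzero integer k, real t ≥ 0, and all η, ξ ∈ ℝ, there is an absolute constant C such that (|p'|/p)(t;k,η) ≤ C·(⟨η−ξ⟩²·(|p'|/p)(t;k,ξ) + |k|·⟨η−ξ⟩³·p(t;k,ξ)^{-1}). -/
set_option maxHeartbeats 1000000 in
theorem stmt_11 :
    ∃ C > (0 : ℝ), ∀ (k : ℤ), k ≠ 0 → ∀ (t : ℝ), 0 ≤ t → ∀ (η ξ : ℝ),
      |(-2 * (k : ℝ) * (η - k * t))| / ((k : ℝ) ^ 2 + (η - k * t) ^ 2) ≤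
        C * (Real.sqrt (1 + (η - ξ) ^ 2) ^ 2 *
              (|(-2 * (k : ℝ) * (ξ - k * t))| / ((k : ℝ) ^ 2 + (ξ - k * t) ^ 2)) +
            |(k : ℝ)| * Real.sqrt (1 + (η - ξ) ^ 2) ^ 3 *
              ((k : ℝ) ^ 2 + (ξ - k * t) ^ 2)⁻¹) := by
  refine ⟨4, by norm_num, ?_⟩
  intro k hk t ht η ξ
  have hk0 : (k : ℝ) ≠ 0 := Int.cast_ne_zero.mpr hk
  have hk1 : 1 ≤ |(k : ℝ)| := by
    have : (1 : ℤ) ≤ |k| := Int.one_le_abs hk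
    calc (1:ℝ) ≤ (|k| : ℤ) := by exact_mod_cast this
    _ = |(k:ℝ)| := by push_cast; ring
  set a := η - k * t with ha
  set b := ξ - k * t with hb
  set d := η - ξ with hd
  have hab : a - b = d := by simp [ha, hb, hd]
  set s := Real.sqrt (1 + d ^ 2) with hs
  have hs2 : s ^ 2 = 1 + d ^ 2 := Real.sq_sqrt (by positivity)
  have hsd : |d| ≤ s := by
    rw [hs]
    have : |d| = Real.sqrt (d ^ 2) := (Real.sqrt_sq_eq_abs d).symm
    rw [this]
    exact Real.sqrt_le_sqrt (by nlinarith)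
  have hs0 : 0 ≤ s := Real.sqrt_nonneg _
  have hA : (0:ℝ) < (k : ℝ) ^ 2 + a ^ 2 := by positivity
  have hB : (0:ℝ) < (k : ℝ) ^ 2 + b ^ 2 := by positivity
  have habs1 : |(-2 * (k : ℝ) * a)| = 2 * |(k:ℝ)| * |a| := by
    rw [abs_mul, abs_mul]; norm_num
  have habs2 : |(-2 * (k : ℝ) * b)| = 2 * |(k:ℝ)| * |b| := by
    rw [abs_mul, abs_mul]; norm_num
  rw [habs1, habs2]
  have hk2 : (1:ℝ) ≤ (k:ℝ)^2 := by nlinarith [sq_abs ((k:ℝ))]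
  have haab : |a| ≤ |b| + |d| := by
    calc |a| = |b + d| := by rw [show a = b + d by linarith [hab]]
    _ ≤ |b| + |d| := abs_add_le _ _
  have hBA : (k : ℝ)^2 + b^2 ≤ 2 * ((k:ℝ)^2 + a^2) * (1 + d^2) := by
    have hb' : b = a - d := by linarith [hab]
    rw [hb']
    nlinarith [hk2, sq_nonneg (a + d), sq_nonneg (a * d), sq_nonneg d]
  have hs3 : (1 + d^2) * |d| ≤ s^3 := by
    have : s^3 = s^2 * s := by ring
    rw [this, hs2]
    have h1 : (0:ℝ) ≤ 1 + d^2 := by positivity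
    nlinarith
  have key : 2 * |a| * ((k:ℝ)^2 + b^2) ≤
      8 * (1 + d^2) * |b| * ((k:ℝ)^2 + a^2) + 4 * s^3 * ((k:ℝ)^2 + a^2) := by
    have h1 : 2 * |a| * ((k:ℝ)^2 + b^2) ≤ 2 * (|b| + |d|) * (2 * ((k:ℝ)^2 + a^2) * (1 + d^2)) := by
      apply mul_le_mul
      · nlinarith [abs_nonneg a, abs_nonneg b, abs_nonneg d]
      · exact hBA
      · positivity
      · positivity
    have h2 : 2 * (|b| + |d|) * (2 * ((k:ℝ)^2 + a^2) * (1 + d^2)) =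
        4 * (1 + d^2) * |b| * ((k:ℝ)^2 + a^2) + 4 * ((1 + d^2) * |d|) * ((k:ℝ)^2 + a^2) := by ring
    have h3 : 4 * ((1 + d^2) * |d|) * ((k:ℝ)^2 + a^2) ≤ 4 * s^3 * ((k:ℝ)^2 + a^2) := by
      nlinarith
    have h4 : (0:ℝ) ≤ 4 * (1 + d^2) * |b| * ((k:ℝ)^2 + a^2) := by positivity
    linarith
  have hrhs : 4 * (s ^ 2 * (2 * |(k:ℝ)| * |b| / ((k:ℝ)^2 + b^2)) +
      |(k:ℝ)| * s ^ 3 * ((k:ℝ)^2 + b^2)⁻¹) =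
      (4 * ((1 + d^2) * (2 * |(k:ℝ)| * |b|) + |(k:ℝ)| * s^3)) / ((k:ℝ)^2 + b^2) := by
    rw [hs2]; field_simp
  rw [hrhs, div_le_div_iff₀ hA hB]
  have hkpos : 0 < |(k:ℝ)| := by linarith
  calc 2 * |(k:ℝ)| * |a| * ((k:ℝ)^2 + b^2)
      = |(k:ℝ)| * (2 * |a| * ((k:ℝ)^2 + b^2)) := by ring
    _ ≤ |(k:ℝ)| * (8 * (1 + d^2) * |b| * ((k:ℝ)^2 + a^2) + 4 * s^3 * ((k:ℝ)^2 + a^2)) := by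
        exact mul_le_mul_of_nonneg_left key hkpos.le
    _ = 4 * ((1 + d^2) * (2 * |(k:ℝ)| * |b|) + |(k:ℝ)| * s^3) * ((k:ℝ)^2 + a^2) := by ring
end

section
/- For every nonzero integer k, t ≥ 0, all η, ξ ∈ ℝ and δ ∈ [0,1], the weight w from the paper satisfies w(t;k,η)^{-δ} ≤ C^δ·⟨η−ξ⟩^δ·w(t;k,ξ)^{-δ} for an absolute constant C, where w(t;k,η) = ((k²+η²)/p(t;k,η))^{1/4} if t < η/k and w(t;k,η) = ((k²+η²)p(t;k,η)/k⁴)^{1/4} if t ≥ η/k. -/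
noncomputable def wWeight (k : ℤ) (η t : ℝ) : ℝ :=
  if t < η / k then
    (((k : ℝ) ^ 2 + η ^ 2) / ((k : ℝ) ^ 2 + (η - k * t) ^ 2)) ^ ((1 : ℝ) / 4)
  else
    (((k : ℝ) ^ 2 + η ^ 2) * ((k : ℝ) ^ 2 + (η - k * t) ^ 2) / (k : ℝ) ^ 4) ^ ((1 : ℝ) / 4)

lemma quarter_le {x y c : ℝ} (hx : 0 ≤ x) (hy : 0 ≤ y) (hc : 0 ≤ c)
    (h : x ≤ c ^ 4 * y) : x ^ ((1:ℝ)/4) ≤ c * y ^ ((1:ℝ)/4) := by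
  have h1 : x ^ ((1:ℝ)/4) ≤ (c ^ 4 * y) ^ ((1:ℝ)/4) :=
    Real.rpow_le_rpow hx h (by norm_num)
  have h2 : (c ^ 4 * y) ^ ((1:ℝ)/4) = c * y ^ ((1:ℝ)/4) := by
    rw [Real.mul_rpow (by positivity) hy]
    congr 1
    rw [← Real.rpow_natCast c 4, ← Real.rpow_mul hc]
    norm_num
  rw [h2] at h1
  exact h1

lemma exch (K A B d : ℝ) (hK : 1 ≤ K) (hd : (A - B) ^ 2 ≤ d) :
    K + A ^ 2 ≤ 2 * (1 + d) * (K + B ^ 2) := by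
  have hd0 : 0 ≤ d := le_trans (sq_nonneg _) hd
  nlinarith [sq_nonneg (A - 2*B), mul_nonneg hd0 (sub_nonneg.mpr hK), sq_nonneg B]

lemma key (K m u v : ℝ) (hK : 1 ≤ K ^ 2) (hm : 0 ≤ m) (hu : 0 ≤ u) (hv : 0 ≤ v) :
    (K^2 + (m - v)^2) * ((K^2 + u^2) * (K^2 + v^2)) ≤
      (1 + (u + v)^2)^2 * ((K^2 + (m + u)^2) * K^4) := by
  have hK0 : (0:ℝ) ≤ K ^ 2 := by positivity
  rcases le_or_gt v m with h | h
  · have h1 : K^2 + (m - v)^2 ≤ K^2 + (m + u)^2 := by nlinarith [mul_nonneg hv hu]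
    have h2 : K^2 + u^2 ≤ K^2 * (1 + (u + v)^2) := by
      nlinarith [mul_nonneg hu hv, mul_nonneg (sub_nonneg.mpr hK) (sq_nonneg (u + v))]
    have h3 : K^2 + v^2 ≤ K^2 * (1 + (u + v)^2) := by
      nlinarith [mul_nonneg hu hv, mul_nonneg (sub_nonneg.mpr hK) (sq_nonneg (u + v))]
    calc (K^2 + (m - v)^2) * ((K^2 + u^2) * (K^2 + v^2))
        ≤ (K^2 + (m + u)^2) * ((K^2 * (1 + (u + v)^2)) * (K^2 * (1 + (u + v)^2))) := by
          apply mul_le_mul h1 (mul_le_mul h2 h3 (by positivity) (by positivity))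
            (by positivity) (by positivity)
      _ = (1 + (u + v)^2)^2 * ((K^2 + (m + u)^2) * K^4) := by ring
  · have h1 : K^2 + (m - v)^2 ≤ K^2 * (1 + (u + v)^2) := by
      nlinarith [mul_nonneg hm (sub_nonneg.mpr h.le), mul_nonneg hu hv,
        mul_nonneg hm hu, mul_nonneg (sub_nonneg.mpr hK) (sq_nonneg (u + v))]
    have h2 : K^2 + u^2 ≤ K^2 + (m + u)^2 := by nlinarith [mul_nonneg hm hu]
    have h3 : K^2 + v^2 ≤ K^2 * (1 + (u + v)^2) := by
      nlinarith [mul_nonneg hu hv, mul_nonneg (sub_nonneg.mpr hK) (sq_nonneg (u + v))]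
    calc (K^2 + (m - v)^2) * ((K^2 + u^2) * (K^2 + v^2))
        ≤ (K^2 * (1 + (u + v)^2)) * ((K^2 + (m + u)^2) * (K^2 * (1 + (u + v)^2))) := by
          apply mul_le_mul h1 (mul_le_mul h2 h3 (by positivity) (by positivity))
            (by positivity) (by positivity)
      _ = (1 + (u + v)^2)^2 * ((K^2 + (m + u)^2) * K^4) := by ring

lemma wWeight_pos (k : ℤ) (hk : k ≠ 0) (η t : ℝ) : 0 < wWeight k η t := by
  have hk' : ((k:ℝ)) ≠ 0 := Int.cast_ne_zero.mpr hk
  unfold wWeight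
  split_ifs <;> apply Real.rpow_pos_of_pos <;> positivity

set_option maxHeartbeats 1000000 in
lemma wle (k : ℤ) (hk : k ≠ 0) (t : ℝ) (ht : 0 ≤ t) (η ξ : ℝ) :
    wWeight k ξ t ≤ 2 * Real.sqrt (1 + (η - ξ) ^ 2) * wWeight k η t := by
  have hk' : ((k:ℝ)) ≠ 0 := Int.cast_ne_zero.mpr hk
  have hK1 : (1:ℝ) ≤ (k:ℝ) ^ 2 := by
    have h1 : (1:ℤ) ≤ |k| := Int.one_le_abs hk
    have h2 : (1:ℤ) ≤ k ^ 2 := by nlinarith [sq_abs k]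
    exact_mod_cast h2
  have hk2 : (0:ℝ) < (k:ℝ) ^ 2 := by positivity
  have hk4 : (0:ℝ) < (k:ℝ) ^ 4 := by positivity
  set D := (η - ξ) ^ 2 with hD
  have hD0 : 0 ≤ D := sq_nonneg _
  set L := Real.sqrt (1 + D) with hLdef
  have hL0 : 0 ≤ L := Real.sqrt_nonneg _
  have hL2 : L ^ 2 = 1 + D := Real.sq_sqrt (by positivity)
  have hc4 : (2 * L) ^ 4 = 16 * (1 + D) ^ 2 := by
    have h : (2 * L) ^ 4 = 16 * (L ^ 2) ^ 2 := by ring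
    rw [h, hL2]
  have hq : ∀ x : ℝ, (0:ℝ) < (k:ℝ) ^ 2 + x ^ 2 := fun x => by positivity
  have hb : (k:ℝ)^2 + ξ^2 ≤ 2 * (1 + D) * ((k:ℝ)^2 + η^2) :=
    exch _ ξ η D hK1 (le_of_eq (by ring))
  unfold wWeight
  split_ifs with hξ hη hη
  · -- both "then"
    apply quarter_le (by positivity) (by positivity) (by positivity)
    rw [hc4, ← mul_div_assoc, div_le_div_iff₀ (hq _) (hq _)]
    have hp : (k:ℝ)^2 + (η - k*t)^2 ≤ 2 * (1 + D) * ((k:ℝ)^2 + (ξ - k*t)^2) :=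
      exch _ (η - k*t) (ξ - k*t) D hK1 (le_of_eq (by ring))
    have m1 := mul_le_mul hb hp (le_of_lt (hq (η - k*t))) (by positivity)
    nlinarith [m1, mul_nonneg (mul_nonneg (sq_nonneg (1 + D)) (le_of_lt (hq η))) (le_of_lt (hq (ξ - k*t)))]
  · -- ξ "then", η "else"
    apply quarter_le (by positivity) (by positivity) (by positivity)
    rw [hc4, ← mul_div_assoc, div_le_div_iff₀ (hq _) hk4]
    have hpk : (k:ℝ)^2 ≤ (k:ℝ)^2 + (η - k*t)^2 := by nlinarith [sq_nonneg (η - k*t)]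
    have hqk : (k:ℝ)^2 ≤ (k:ℝ)^2 + (ξ - k*t)^2 := by nlinarith [sq_nonneg (ξ - k*t)]
    have c1 : ((k:ℝ)^2 + ξ^2) * ((k:ℝ)^2 * (k:ℝ)^2) ≤
        (2 * (1 + D) * ((k:ℝ)^2 + η^2)) * (((k:ℝ)^2 + (η - k*t)^2) * ((k:ℝ)^2 + (ξ - k*t)^2)) := by
      apply mul_le_mul hb (mul_le_mul hpk hqk (by positivity) (le_of_lt (hq _)))
        (by positivity) (by positivity)
    have n1 : 0 ≤ D * (((k:ℝ)^2 + η^2) * (((k:ℝ)^2 + (η - k*t)^2) * ((k:ℝ)^2 + (ξ - k*t)^2))) :=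
      mul_nonneg hD0 (mul_nonneg (le_of_lt (hq η)) (mul_nonneg (le_of_lt (hq _)) (le_of_lt (hq _))))
    have n2 : 0 ≤ (D*D) * (((k:ℝ)^2 + η^2) * (((k:ℝ)^2 + (η - k*t)^2) * ((k:ℝ)^2 + (ξ - k*t)^2))) :=
      mul_nonneg (mul_nonneg hD0 hD0) (mul_nonneg (le_of_lt (hq η)) (mul_nonneg (le_of_lt (hq _)) (le_of_lt (hq _))))
    have n3 : 0 ≤ ((k:ℝ)^2 + η^2) * (((k:ℝ)^2 + (η - k*t)^2) * ((k:ℝ)^2 + (ξ - k*t)^2)) :=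
      mul_nonneg (le_of_lt (hq η)) (mul_nonneg (le_of_lt (hq _)) (le_of_lt (hq _)))
    linarith [c1, n1, n2, n3]
  · -- ξ "else", η "then" : the hard mixed case
    apply quarter_le (by positivity) (by positivity) (by positivity)
    rw [hc4, ← mul_div_assoc, div_le_div_iff₀ hk4 (hq _)]
    have hkey : ((k:ℝ)^2 + ξ^2) * (((k:ℝ)^2 + (η - k*t)^2) * ((k:ℝ)^2 + (ξ - k*t)^2)) ≤
        (1 + D)^2 * (((k:ℝ)^2 + η^2) * (k:ℝ)^4) := by
      rw [hD]
      rcases hk'.lt_or_gt with hneg | hpos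
      · have hu : 0 ≤ (k:ℝ)*t - η := by
          have := (lt_div_iff_of_neg hneg).mp hη
          nlinarith
        have hv : 0 ≤ ξ - (k:ℝ)*t := by
          have := (div_le_iff_of_neg hneg).mp (not_lt.mp hξ)
          nlinarith
        have hm : 0 ≤ -((k:ℝ)*t) := by nlinarith
        have h := key (k:ℝ) (-((k:ℝ)*t)) ((k:ℝ)*t - η) (ξ - (k:ℝ)*t) hK1 hm hu hv
        linarith [h]
      · have hu : 0 ≤ η - (k:ℝ)*t := by
          have := (lt_div_iff₀ hpos).mp hη
          nlinarith
        have hv : 0 ≤ (k:ℝ)*t - ξ := by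
          have := (div_le_iff₀ hpos).mp (not_lt.mp hξ)
          nlinarith
        have hm : 0 ≤ (k:ℝ)*t := by positivity
        have h := key (k:ℝ) ((k:ℝ)*t) (η - (k:ℝ)*t) ((k:ℝ)*t - ξ) hK1 hm hu hv
        linarith [h]
    have n1 : 0 ≤ (1 + D)^2 * (((k:ℝ)^2 + η^2) * (k:ℝ)^4) :=
      mul_nonneg (sq_nonneg _) (mul_nonneg (le_of_lt (hq η)) (le_of_lt hk4))
    nlinarith [hkey, n1]
  · -- both "else"
    apply quarter_le (by positivity) (by positivity) (by positivity)
    rw [hc4, ← mul_div_assoc, div_le_div_iff₀ hk4 hk4]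
    have hp : (k:ℝ)^2 + (ξ - k*t)^2 ≤ 2 * (1 + D) * ((k:ℝ)^2 + (η - k*t)^2) :=
      exch _ (ξ - k*t) (η - k*t) D hK1 (le_of_eq (by ring))
    have m1 := mul_le_mul hb hp (le_of_lt (hq (ξ - k*t))) (by positivity)
    have m2 := mul_le_mul_of_nonneg_right m1 (le_of_lt hk4)
    have n1 : 0 ≤ (1 + D)^2 * ((((k:ℝ)^2 + η^2) * ((k:ℝ)^2 + (η - k*t)^2)) * (k:ℝ)^4) :=
      mul_nonneg (sq_nonneg _) (mul_nonneg (mul_nonneg (le_of_lt (hq η)) (le_of_lt (hq _))) (le_of_lt hk4))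
    nlinarith [m2, n1]

theorem stmt_19 :
    ∃ C > (0 : ℝ), ∀ (k : ℤ), k ≠ 0 → ∀ (t : ℝ), 0 ≤ t → ∀ (η ξ δ : ℝ),
      0 ≤ δ → δ ≤ 1 →
      wWeight k η t ^ (-δ) ≤
        C ^ δ * Real.sqrt (1 + (η - ξ) ^ 2) ^ δ * wWeight k ξ t ^ (-δ) := by
  refine ⟨2, by norm_num, ?_⟩
  intro k hk t ht η ξ δ hδ0 hδ1
  have hwη := wWeight_pos k hk η t
  have hwξ := wWeight_pos k hk ξ t
  have hL0 : 0 ≤ Real.sqrt (1 + (η - ξ) ^ 2) := Real.sqrt_nonneg _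
  have hmain := wle k hk t ht η ξ
  set L := Real.sqrt (1 + (η - ξ) ^ 2) with hLdef
  rw [Real.rpow_neg hwη.le, Real.rpow_neg hwξ.le,
    ← Real.inv_rpow hwη.le, ← Real.inv_rpow hwξ.le,
    ← Real.mul_rpow (by norm_num) hL0,
    ← Real.mul_rpow (by positivity) (inv_nonneg.mpr hwξ.le)]
  apply Real.rpow_le_rpow (inv_nonneg.mpr hwη.le) _ hδ0
  rw [inv_eq_one_div, inv_eq_one_div, mul_one_div, div_le_div_iff₀ hwη hwξ]
  nlinarith [hmain]
end
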